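/- Let u ∈ L^∞(ℝ³) (real-valued, with ‖u‖_∞ > 0), λ ∈ (0,1), δ ∈ (1/(1+λ), 1), r > 0, and x₀ ∈ ℝ³. Suppose m({x : u(x) > λ‖u‖_∞} ∩ B(x₀,r)) > δ·Π(3)·r³, where Π(3) is the volume of the unit ball in ℝ³. Let f be any measurable function with 0 ≤ f ≤ 1, f = 1 on B(x₀,r), and f = 0 outside B(x₀,(1+η)r), where η > 0 satisfies (1+η)³ = (δ(1+λ)+1)/2. Then ∫_{ℝ³} u(x) f(x) dx > ((δ(1+λ)−1)/2) · Π(3) · r³ · ‖u‖_∞. -/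

import Mathlib

open MeasureTheory Metric Set

/-- Combined lower bound `I - |II| - |III|` from the mixing lemma: if the super-level set
`{u > λ‖u‖_∞}` occupies more than a `δ` fraction of `B(x₀,r)`, and `f` is a cut-off equal
to `1` on `B(x₀,r)` and vanishing outside `B(x₀,(1+η)r)` with `(1+η)³ = (δ(1+λ)+1)/2`,
then `∫ u f > ((δ(1+λ)-1)/2)·Π(3)·r³·‖u‖_∞`. -/
theorem pairing_lower_bound (u : EuclideanSpace ℝ (Fin 3) → ℝ)
    (hu_meas : Measurable u) (hu : MemLp u ⊤ volume)
    (N : ℝ) (hN : N = (eLpNorm u ⊤ volume).toReal) (hNpos : 0 < N)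
    (lam δ r η : ℝ) (hlam : lam ∈ Set.Ioo (0:ℝ) 1)
    (hδ : δ ∈ Set.Ioo (1/(1+lam)) 1) (hr : 0 < r)
    (x₀ : EuclideanSpace ℝ (Fin 3))
    (Pi3 : ℝ) (hPi3 : Pi3 = (volume (ball (0 : EuclideanSpace ℝ (Fin 3)) 1)).toReal)
    (hη : 0 < η) (hη3 : (1+η)^3 = (δ*(1+lam)+1)/2)
    (hbig : ENNReal.ofReal (δ * Pi3 * r^3)
      < volume ({x | lam * N < u x} ∩ ball x₀ r))
    (f : EuclideanSpace ℝ (Fin 3) → ℝ) (hf_meas : Measurable f)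
    (hf01 : ∀ x, 0 ≤ f x ∧ f x ≤ 1)
    (hf1 : ∀ x ∈ ball x₀ r, f x = 1)
    (hf0 : ∀ x ∉ ball x₀ ((1+η)*r), f x = 0) :
    ((δ*(1+lam)-1)/2) * Pi3 * r^3 * N < ∫ x, u x * f x := by
  obtain ⟨hlam0, hlam1⟩ := hlam
  obtain ⟨hδ0, hδ1⟩ := hδ
  have hlam1' : (0:ℝ) < 1 + lam := by linarith
  have hδpos : 0 < δ := lt_trans (by positivity) hδ0
  have hPi3nn : 0 ≤ Pi3 := by rw [hPi3]; exact ENNReal.toReal_nonneg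
  set S : Set (EuclideanSpace ℝ (Fin 3)) := {x | lam * N < u x} ∩ ball x₀ r with hSdef
  have hS : MeasurableSet S :=
    (measurableSet_lt measurable_const hu_meas).inter measurableSet_ball
  have hRpos : 0 < (1+η)*r := by positivity
  set B' : Set (EuclideanSpace ℝ (Fin 3)) := ball x₀ ((1+η)*r) with hB'def
  have hsub : S ⊆ B' := fun x hx => ball_subset_ball (by nlinarith) hx.2
  -- a.e. bound on u
  have hubd : ∀ᵐ x ∂(volume : Measure (EuclideanSpace ℝ (Fin 3))), ‖u x‖ ≤ N := by
    filter_upwards [enorm_ae_le_eLpNormEssSup u volume] with x hx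
    have hx' : (‖u x‖₊ : ENNReal) ≤ eLpNorm u ⊤ volume := by rwa [eLpNorm_exponent_top]
    have := ENNReal.toReal_mono hu.2.ne hx'
    simpa [hN] using this
  -- the dominating indicator function
  set g : EuclideanSpace ℝ (Fin 3) → ℝ := B'.indicator (fun _ => N) with hgdef
  have hgint : Integrable g volume :=
    (integrable_indicator_iff measurableSet_ball).mpr
      (integrableOn_const (C := N) measure_ball_lt_top.ne)
  have hbound : ∀ᵐ x ∂(volume : Measure (EuclideanSpace ℝ (Fin 3))),
      ‖u x * f x‖ ≤ g x := by
    filter_upwards [hubd] with x hx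
    by_cases hxB : x ∈ B'
    · have h1 : |f x| ≤ 1 := abs_le.mpr ⟨by linarith [(hf01 x).1], (hf01 x).2⟩
      have : ‖u x * f x‖ = ‖u x‖ * |f x| := by rw [norm_mul]; rfl
      rw [this, hgdef, indicator_of_mem hxB]
      calc ‖u x‖ * |f x| ≤ N * 1 :=
            mul_le_mul hx h1 (abs_nonneg _) (le_of_lt hNpos)
        _ = N := mul_one N
    · simp [hf0 x hxB, hgdef, indicator_of_notMem hxB]
  have hint : Integrable (fun x => u x * f x) volume :=
    hgint.mono' ((hu_meas.mul hf_meas).aestronglyMeasurable) hbound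
  -- measure facts
  have hSfin : volume S ≠ ⊤ := ((measure_mono hsub).trans_lt measure_ball_lt_top).ne
  have hs_lb : δ * Pi3 * r^3 < (volume S).toReal := by
    have h := (ENNReal.toReal_lt_toReal ENNReal.ofReal_ne_top hSfin).mpr hbig
    rwa [ENNReal.toReal_ofReal (by positivity)] at h
  have hvolB' : (volume B').toReal = (1+η)^3 * r^3 * Pi3 := by
    rw [hB'def, Measure.addHaar_ball volume x₀ hRpos.le, ENNReal.toReal_mul,
      ENNReal.toReal_ofReal (by positivity), finrank_euclideanSpace_fin, ← hPi3]
    ring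
  have hsB' : (volume S).toReal ≤ (volume B').toReal :=
    ENNReal.toReal_mono measure_ball_lt_top.ne (measure_mono hsub)
  -- split the integral
  have hsplit := integral_add_compl hS hint
  -- lower bound on S
  have hI : lam * N * (volume S).toReal ≤ ∫ x in S, u x * f x := by
    have h := setIntegral_mono_on
      (integrableOn_const (C := lam * N) hSfin)
      hint.integrableOn hS (fun x hx => by
        have h1 : f x = 1 := hf1 x hx.2
        have h2 : lam * N < u x := hx.1
        rw [h1, mul_one]; exact h2.le)
    simpa [setIntegral_const, smul_eq_mul, mul_comm, Measure.real] using h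
  -- bound on the complement
  have hII : -(N * ((volume B').toReal - (volume S).toReal)) ≤ ∫ x in Sᶜ, u x * f x := by
    have habs : |∫ x in Sᶜ, u x * f x| ≤ N * ((volume B').toReal - (volume S).toReal) := by
      have h1 : |∫ x in Sᶜ, u x * f x| ≤ ∫ x in Sᶜ, ‖u x * f x‖ := by
        simpa using norm_integral_le_integral_norm (μ := volume.restrict Sᶜ)
          (fun x => u x * f x)
      have h2 : ∫ x in Sᶜ, ‖u x * f x‖ ≤ ∫ x in Sᶜ, g x :=
        setIntegral_mono_ae hint.norm.integrableOn hgint.integrableOn hbound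
      have h3 : ∫ x in Sᶜ, g x = (volume (Sᶜ ∩ B')).toReal * N := by
        rw [hgdef, setIntegral_indicator measurableSet_ball, setIntegral_const, smul_eq_mul]; rfl
      have h4 : volume (Sᶜ ∩ B') = volume B' - volume S := by
        rw [inter_comm, ← diff_eq, measure_diff hsub hS.nullMeasurableSet hSfin]
      have h5 : (volume (Sᶜ ∩ B')).toReal = (volume B').toReal - (volume S).toReal := by
        rw [h4, ENNReal.toReal_sub_of_le (measure_mono hsub) measure_ball_lt_top.ne]
      calc |∫ x in Sᶜ, u x * f x| ≤ ∫ x in Sᶜ, g x := le_trans h1 h2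
        _ = N * ((volume B').toReal - (volume S).toReal) := by rw [h3, h5]; ring
    linarith [neg_abs_le (∫ x in Sᶜ, u x * f x)]
  -- combine
  have hkey : ((δ*(1+lam)-1)/2) * Pi3 * r^3 * N
      < lam * N * (volume S).toReal
        - N * ((volume B').toReal - (volume S).toReal) := by
    rw [hvolB', hη3]
    nlinarith [mul_lt_mul_of_pos_left hs_lb (mul_pos hNpos hlam1')]
  linarith [hI, hII, hsplit.ge, hsplit.le]
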